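/- Let T be the 2×2 complex matrix with rows (0, 1) and (0, 0), acting on ℓ_p². Then the numerical range V_p(T) is the closed disc centered at the origin of radius (1/p)^{1/p}·(1/q)^{1/q}, i.e. V_p(T) = { z ∈ ℂ : |z| ≤ (1/p)^{1/p}·(1/q)^{1/q} }; in particular, the numerical radius satisfies v_p(T) = (1/p)^{1/p}·(1/q)^{1/q}. -/

import Mathlib

open Complex Real

/-- The `ℓ_p` norm on `ℂ²`. -/
noncomputable def lpNorm (p : ℝ) (x : Fin 2 → ℂ) : ℝ :=
  (∑ k, ‖x k‖ ^ p) ^ (1 / p)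

/-- The numerical range of a `2 × 2` complex matrix acting on `ℓ_p²`.
Note that when `x k = 0` the corresponding term vanishes since `conj (x k) = 0`. -/
noncomputable def numRange (p : ℝ) (T : Matrix (Fin 2) (Fin 2) ℂ) : Set ℂ :=
  { z | ∃ x : Fin 2 → ℂ, lpNorm p x = 1 ∧
      z = ∑ k, T.mulVec x k * (starRingEnd ℂ) (x k) * ((‖x k‖ ^ (p - 2) : ℝ) : ℂ) }

/-- The numerical radius of a `2 × 2` complex matrix acting on `ℓ_p²`. -/
noncomputable def numRadius (p : ℝ) (T : Matrix (Fin 2) (Fin 2) ℂ) : ℝ :=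
  sSup ((‖·‖) '' numRange p T)

/-- AM-GM bound: `u^(1/q) * v^(1/p) ≤ (1/p)^(1/p) * (1/q)^(1/q)` when `u+v=1`. -/
lemma aux_amgm (p q : ℝ) (hp : 1 < p) (hq : q = p / (p - 1)) {u v : ℝ}
    (hu : 0 ≤ u) (hv : 0 ≤ v) (huv : u + v = 1) :
    u ^ (1/q) * v ^ (1/p) ≤ (1 / p) ^ (1 / p) * (1 / q) ^ (1 / q) := by
  have hp0 : (0:ℝ) < p := by linarith
  have hp1 : (0:ℝ) < p - 1 := by linarith
  have hq0 : (0:ℝ) < q := by rw [hq]; positivity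
  have hw : 1/q + 1/p = 1 := by
    rw [hq]; field_simp; ring
  have key := Real.geom_mean_le_arith_mean2_weighted
    (w₁ := 1/q) (w₂ := 1/p) (p₁ := q*u) (p₂ := p*v)
    (by positivity) (by positivity) (by positivity) (by positivity) hw
  have h1 : (1/q) * (q*u) + (1/p) * (p*v) = 1 := by
    field_simp; linarith
  rw [h1] at key
  rw [Real.mul_rpow (le_of_lt hq0) hu, Real.mul_rpow (le_of_lt hp0) hv] at key
  have hA : (0:ℝ) < q ^ (1/q) := Real.rpow_pos_of_pos hq0 _
  have hB : (0:ℝ) < p ^ (1/p) := Real.rpow_pos_of_pos hp0 _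
  have hM : (1 / p) ^ (1 / p) * (1 / q) ^ (1 / q) = (p ^ (1/p))⁻¹ * (q ^ (1/q))⁻¹ := by
    rw [one_div p, one_div q, Real.inv_rpow (le_of_lt hp0), Real.inv_rpow (le_of_lt hq0)]
  rw [hM]
  have hun : 0 ≤ u ^ (1/q) := Real.rpow_nonneg hu _
  have hvn : 0 ≤ v ^ (1/p) := Real.rpow_nonneg hv _
  rw [show q ^ (1/q) * u ^ (1/q) * (p ^ (1/p) * v ^ (1/p))
      = (u ^ (1/q) * v ^ (1/p)) * (q ^ (1/q) * p ^ (1/p)) by ring] at key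
  rw [show (p ^ (1/p))⁻¹ * (q ^ (1/q))⁻¹ = (q ^ (1/q) * p ^ (1/p))⁻¹ by
    rw [mul_inv]; ring]
  rw [← one_div, le_div_iff₀ (by positivity)]
  exact key

theorem nilpotent_numRange_is_disc (p q : ℝ) (hp : 1 < p) (hq : q = p / (p - 1)) :
    numRange p !![0, 1; 0, 0] =
      { z : ℂ | ‖z‖ ≤ (1 / p) ^ (1 / p) * (1 / q) ^ (1 / q) } ∧
    numRadius p !![0, 1; 0, 0] = (1 / p) ^ (1 / p) * (1 / q) ^ (1 / q) := by
  have hp0 : (0:ℝ) < p := by linarith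
  have hp1 : (0:ℝ) < p - 1 := by linarith
  have hq0 : (0:ℝ) < q := by rw [hq]; positivity
  have hq1 : 1 < q := by rw [hq, lt_div_iff₀ hp1]; linarith
  set M : ℝ := (1 / p) ^ (1 / p) * (1 / q) ^ (1 / q) with hMdef
  have hM0 : 0 ≤ M := by positivity
  have hinvq : 1/q = (p-1)/p := by rw [hq, one_div_div]
  have h1q : 1 - 1/q = 1/p := by rw [hinvq]; field_simp; ring
  have hpq' : p * (1/q) = p - 1 := by rw [hinvq]; field_simp
  have hppinv : (1/p) * p = 1 := by field_simp
  have hnorm1 : ∀ x : Fin 2 → ℂ, lpNorm p x = 1 →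
      ‖x 0‖ ^ p + ‖x 1‖ ^ p = 1 := by
    intro x hx
    have hs : 0 ≤ ‖x 0‖ ^ p + ‖x 1‖ ^ p := by positivity
    have hx' : (‖x 0‖ ^ p + ‖x 1‖ ^ p) ^ (1/p) = 1 := by
      have h := hx; unfold lpNorm at h; rwa [Fin.sum_univ_two] at h
    have h2 : ((‖x 0‖ ^ p + ‖x 1‖ ^ p) ^ (1/p)) ^ p = 1 := by
      rw [hx', Real.one_rpow]
    rwa [← Real.rpow_mul hs, hppinv, Real.rpow_one] at h2
  have hsum : ∀ x : Fin 2 → ℂ,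
      (∑ k, (!![0, 1; 0, 0] : Matrix (Fin 2) (Fin 2) ℂ).mulVec x k * (starRingEnd ℂ) (x k) *
        ((‖x k‖ ^ (p - 2) : ℝ) : ℂ))
      = x 1 * (starRingEnd ℂ) (x 0) * ((‖x 0‖ ^ (p - 2) : ℝ) : ℂ) := by
    intro x
    simp [Fin.sum_univ_two, Matrix.mulVec, dotProduct]
  have hdisc : numRange p !![0, 1; 0, 0] = { z : ℂ | ‖z‖ ≤ M } := by
    ext z
    simp only [numRange, Set.mem_setOf_eq]
    constructor
    · rintro ⟨x, hx, rfl⟩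
      rw [hsum x]
      set a := ‖x 0‖ with hadef
      set b := ‖x 1‖ with hbdef
      have ha : 0 ≤ a := norm_nonneg _
      have hb : 0 ≤ b := norm_nonneg _
      have hab : a ^ p + b ^ p = 1 := hnorm1 x hx
      have habs : ‖x 1 * (starRingEnd ℂ) (x 0) * ((a ^ (p - 2) : ℝ) : ℂ)‖
          = b * a * a ^ (p - 2) := by
        rw [norm_mul, norm_mul, Complex.norm_conj, Complex.norm_real, Real.norm_eq_abs,
          _root_.abs_of_nonneg (Real.rpow_nonneg ha _)]
      rw [habs]
      rcases eq_or_lt_of_le ha with h0 | h0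
      · rw [← h0]; simpa using hM0
      · have haa : a * a ^ (p - 2) = a ^ (p - 1) := by
          rw [show p - 1 = 1 + (p - 2) by ring, Real.rpow_add h0, Real.rpow_one]
        have hppinv' : p * (1/p) = 1 := by field_simp
        have hrw : b * a * a ^ (p - 2) = (a ^ p) ^ (1/q) * (b ^ p) ^ (1/p) := by
          rw [← Real.rpow_mul ha, ← Real.rpow_mul hb, hpq', hppinv', Real.rpow_one,
            mul_assoc, haa, mul_comm]
        rw [hrw]
        exact aux_amgm p q hp hq (Real.rpow_nonneg ha _) (Real.rpow_nonneg hb _) hab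
    · intro hz
      by_cases hz0 : z = 0
      · refine ⟨![0, 1], ?_, ?_⟩
        · unfold lpNorm
          rw [Fin.sum_univ_two]
          norm_num [Real.zero_rpow hp0.ne', Real.one_rpow]
        · rw [hsum]
          simp [hz0]
      · have hr0 : 0 < ‖z‖ := by
          simpa [norm_pos_iff] using hz0
        set r := ‖z‖ with hrdef
        have hcont : Continuous (fun t : ℝ => t ^ (1/q) * (1 - t) ^ (1/p)) := by
          exact (Real.continuous_rpow_const (by positivity)).mul
            ((Real.continuous_rpow_const (by positivity)).comp
              (continuous_const.sub continuous_id))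
        have hival := intermediate_value_Icc (by positivity : (0:ℝ) ≤ 1/q)
          hcont.continuousOn
        have hf0 : (0:ℝ) ^ (1/q) * (1 - 0) ^ (1/p) = 0 := by
          rw [Real.zero_rpow (by positivity : (1:ℝ)/q ≠ 0), zero_mul]
        have hfq : (1/q:ℝ) ^ (1/q) * (1 - 1/q) ^ (1/p) = M := by
          rw [h1q, hMdef]; ring
        obtain ⟨t, ht, hft⟩ := hival (by
          show r ∈ Set.Icc _ _
          rw [Set.mem_Icc]
          refine ⟨?_, ?_⟩
          · show (0:ℝ) ^ (1/q) * (1 - 0) ^ (1/p) ≤ r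
            rw [hf0]; exact le_of_lt hr0
          · show r ≤ (1/q:ℝ) ^ (1/q) * (1 - 1/q) ^ (1/p)
            rw [hfq]; exact hz)
        obtain ⟨ht0, htq⟩ := ht
        have ht1 : t < 1 := lt_of_le_of_lt htq (by
          rw [div_lt_one hq0]; exact hq1)
        have htpos : 0 < t := by
          rcases lt_or_eq_of_le ht0 with h | h
          · exact h
          · exfalso
            apply hr0.ne'
            rw [← hft, ← h]
            simpa using hf0
        set a : ℝ := t ^ (1/p) with hadef
        have ha0 : 0 < a := Real.rpow_pos_of_pos htpos _
        have hap : a ^ p = t := by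
          rw [hadef, ← Real.rpow_mul (le_of_lt htpos), hppinv, Real.rpow_one]
        have hap1 : a ^ (p - 1) = t ^ (1/q) := by
          rw [hadef, ← Real.rpow_mul (le_of_lt htpos)]
          congr 1
          rw [hinvq]; field_simp
        have hap1pos : 0 < a ^ (p - 1) := Real.rpow_pos_of_pos ha0 _
        set b : ℝ := (1 - t) ^ (1/p) with hbdef
        have hb0 : 0 ≤ b := Real.rpow_nonneg (by linarith) _
        have hbp : b ^ p = 1 - t := by
          rw [hbdef, ← Real.rpow_mul (by linarith : (0:ℝ) ≤ 1 - t), hppinv, Real.rpow_one]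
        refine ⟨![(a:ℂ), z * (((a ^ (p-1) : ℝ) : ℂ))⁻¹], ?_, ?_⟩
        · unfold lpNorm
          rw [Fin.sum_univ_two]
          have e0 : ‖(![(a:ℂ), z * (((a ^ (p-1) : ℝ) : ℂ))⁻¹]) 0‖ = a := by
            simp [_root_.abs_of_nonneg (le_of_lt ha0)]
          have e1 : ‖(![(a:ℂ), z * (((a ^ (p-1) : ℝ) : ℂ))⁻¹]) 1‖ = b := by
            have : ‖z * (((a ^ (p-1) : ℝ) : ℂ))⁻¹‖
                = r * (a ^ (p-1))⁻¹ := by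
              rw [norm_mul, norm_inv, Complex.norm_real, Real.norm_eq_abs,
                _root_.abs_of_nonneg (le_of_lt hap1pos), ← hrdef]
            simp only [Matrix.cons_val_one, Matrix.head_cons, Matrix.cons_val_zero]
            rw [this, ← hft, hap1]
            field_simp
            rfl
          rw [e0, e1, hap, hbp]
          norm_num
        · rw [hsum]
          simp only [Matrix.cons_val_one, Matrix.head_cons, Matrix.cons_val_zero]
          rw [Complex.conj_ofReal]
          have habsa : ‖(a:ℂ)‖ = a := by
            simp [_root_.abs_of_nonneg (le_of_lt ha0)]
          rw [habsa]
          have key : ((((a ^ (p-1) : ℝ) : ℂ))⁻¹ * ((a:ℂ) * ((a ^ (p - 2) : ℝ) : ℂ))) = 1 := by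
            have hr : (a ^ (p-1) : ℝ)⁻¹ * (a * a ^ (p - 2)) = 1 := by
              rw [show a * a ^ (p - 2) = a ^ (p-1) by
                rw [show p - 1 = 1 + (p - 2) by ring, Real.rpow_add ha0, Real.rpow_one]]
              exact inv_mul_cancel₀ hap1pos.ne'
            calc ((((a ^ (p-1) : ℝ) : ℂ))⁻¹ * ((a:ℂ) * ((a ^ (p - 2) : ℝ) : ℂ)))
                = (((a ^ (p-1) : ℝ)⁻¹ * (a * a ^ (p - 2)) : ℝ) : ℂ) := by push_cast; ring
              _ = 1 := by rw [hr]; norm_num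
          calc z = z * 1 := (mul_one z).symm
            _ = z * ((((a ^ (p-1) : ℝ) : ℂ))⁻¹ * ((a:ℂ) * ((a ^ (p - 2) : ℝ) : ℂ))) := by
                rw [key]
            _ = z * (((a ^ (p-1) : ℝ) : ℂ))⁻¹ * (a:ℂ) * ((a ^ (p - 2) : ℝ) : ℂ) := by ring
  refine ⟨hdisc, ?_⟩
  rw [numRadius, hdisc]
  apply IsGreatest.csSup_eq
  constructor
  · exact ⟨(M:ℂ), by simp [_root_.abs_of_nonneg hM0], by simp [_root_.abs_of_nonneg hM0]⟩
  · rintro y ⟨w, hw, rfl⟩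
    exact hw
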